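/- arXiv:1503.08995 — 2 statements merged into one kernel-verified Lean document; each statement's English description precedes it below -/
import Mathlib

section
/- Let x ∈ ST_n^r, p ≥ 1, and 0 < l_1 < l_2 < … < l_p < r. Then x^{(l_1,…,l_p)} ∈ ST_n^r, λ(x^{(l_1,…,l_p)}) = λ(x), and M(x^{(l_1,…,l_p)}) ≤ M(x) for the lexicographic order on λ(x)-tuples of natural numbers. -/
open scoped TensorProduct

namespace SurjPerm

/-- The maximal value of a word (the `r` such that a surjection lands in `{1,…,r}`). -/
def rk (l : List ℕ) : ℕ := l.foldr max 0

/-- `l` is (the list of values of) a surjective map `{1,…,n} → {1,…,r}`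
    with `n = l.length ≥ 1` and `r = rk l`. -/
def IsST (l : List ℕ) : Prop := l ≠ [] ∧ ∀ k, k ∈ l ↔ 1 ≤ k ∧ k ≤ rk l

/-- membership in `ST_n^r`. -/
def memST (l : List ℕ) (n r : ℕ) : Prop := IsST l ∧ l.length = n ∧ rk l = r

/-- concatenation `x × y`. -/
def cat (x y : List ℕ) : List ℕ := x ++ y.map (· + rk x)

/-- iterated concatenation `x¹ × x² × … × xᵖ`. -/
def catAll (l : List (List ℕ)) : List ℕ := l.foldr cat []

/-- standardization of a word. -/
def stdList (l : List ℕ) : List ℕ := l.map fun v => (l.dedup.filter (· ≤ v)).length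

/-- corestriction `x|^K`. -/
def corestrict (x : List ℕ) (K : Finset ℕ) : List ℕ := stdList (x.filter (· ∈ K))

/-- the `i`-th entry of a word, `1`-indexed: `ent f i = f(i)`. -/
def ent (l : List ℕ) (i : ℕ) : ℕ := l.getD (i - 1) 0

/-- composition `f ∘ x` of the map (word) `f` with the map (word) `x`. -/
def wcomp (f x : List ℕ) : List ℕ := x.map fun v => ent f v

/-- the identity permutation `1_n` as a word. -/
def idW (n : ℕ) : List ℕ := (List.range n).map (· + 1)

/-- the permutation `ε(r₁,…,r_p)` as a word: the `i`-th block of positions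
    carries the values shifted above all later blocks. -/
def epsW : List ℕ → List ℕ
  | [] => []
  | r :: rs => ((List.range r).map (· + rs.sum + 1)) ++ epsW rs

/-- `x \ y := ε(r,s) ∘ (x × y)`. -/
def bsl (x y : List ℕ) : List ℕ := wcomp (epsW [rk x, rk y]) (cat x y)

/-- `f` is strictly increasing on each block of the composition `ns`. -/
def blockIncr (ns f : List ℕ) : Prop :=
  ∀ k, k < ns.length → ∀ i j, (ns.take k).sum < i → i < j → j ≤ (ns.take (k + 1)).sum →
    ent f i < ent f j

/-- `(n₁,…,n_p)`-stuffles. -/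
def IsStuffle (ns f : List ℕ) : Prop := IsST f ∧ f.length = ns.sum ∧ blockIncr ns f

/-- `(n₁,…,n_p)`-shuffles: stuffles which are permutations. -/
def IsShuffle (ns f : List ℕ) : Prop := IsStuffle ns f ∧ rk f = ns.sum

/-- irreducible surjections. -/
def Irr (l : List ℕ) : Prop := IsST l ∧ ¬ ∃ g h, IsST g ∧ IsST h ∧ l = cat g h

/-- the set of irreducible surjections of arity `n`. -/
def IrrN (n : ℕ) : Set (List ℕ) := {l | Irr l ∧ l.length = n}

/-- the product `x · y` on surjections. -/
def dotW (x y : List ℕ) : List ℕ :=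
  x.map (fun v => if v < rk x then v else rk x + rk y - 1) ++
    y.map (fun v => if v < rk y then v + rk x - 1 else rk x + rk y - 1)

/-- iterated `·` product `x¹ · x² · … · xᵖ`. -/
def dotAll : List (List ℕ) → List ℕ
  | [] => []
  | a :: as => as.foldl dotW a

/-- indecomposable surjections (for the `·` product). -/
def Indec (l : List ℕ) : Prop := IsST l ∧ ¬ ∃ a b, IsST a ∧ IsST b ∧ l = dotW a b

/-- the set `𝒟`. -/
def inD (x : List ℕ) : Prop :=
  IsST x ∧ ((x = [1] ∨ x = [1, 1]) ∨
    (3 ≤ x.length ∧ Irr x ∧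
      ¬ ∃ y z, ∃ _ : y.length < x.length, inD y ∧ IsST z ∧ x = bsl y z))
termination_by x.length
decreasing_by assumption

/-- the set `𝒞`. -/
def inC (x : List ℕ) : Prop :=
  Irr x ∧
    ((∃ y z, ∃ _ : y.length < x.length, Irr y ∧ ¬ inC y ∧ IsST z ∧ x = bsl y z) ∨
      (∃ a b, IsST a ∧ IsST b ∧ x = dotW a b))
termination_by x.length
decreasing_by assumption

/-- the set `𝔅(l)`, with `𝔅(0) = 𝒟`. -/
def inBfrak (l : ℕ) (x : List ℕ) : Prop :=
  if l = 0 then inD x else ∃ u v, inD u ∧ IsST v ∧ v.length = l ∧ x = bsl u v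

/-- `t_i ∘ f`: exchange the values `i` and `i+1`. -/
def swapVal (i : ℕ) (l : List ℕ) : List ℕ :=
  l.map fun v => if v = i then i + 1 else if v = i + 1 then i else v

/-- covering relation of the weak Bruhat order on `ST_n^r`:
    `f < t_i ∘ f` whenever `f⁻¹(i) < f⁻¹(i+1)`. -/
def wBCov (f g : List ℕ) : Prop :=
  ∃ i, 1 ≤ i ∧ i + 1 ≤ rk f ∧ g = swapVal i f ∧
    ∀ a b, a < f.length → b < f.length → f.getD a 0 = i → f.getD b 0 = i + 1 → a < b

/-- strict weak Bruhat order. -/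
def wBlt : List ℕ → List ℕ → Prop := Relation.TransGen wBCov

/-- weak Bruhat order. -/
def wBle : List ℕ → List ℕ → Prop := Relation.ReflTransGen wBCov

/-- the (0-indexed) positions `j₁-1 < … < j_λ-1` where the maximal value is attained. -/
def maxPos (x : List ℕ) : List ℕ :=
  (List.range x.length).filter fun i => x.getD i 0 = rk x

/-- `λ(x)`. -/
def lam (x : List ℕ) : ℕ := (maxPos x).length

/-- `𝕄(x) = (𝕄(x)_λ, …, 𝕄(x)₁)`. -/
def Mword (x : List ℕ) : List ℕ :=
  (List.zipWith (fun a b => b - a - 1) (maxPos x) ((maxPos x).drop 1) ++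
    [x.length - (maxPos x).getLastD 0 - 1]).reverse

/-- the pieces `x|^{1..l₁}, x|^{l₁+1..l₂}, …, x|^{l_p+1..r}`. -/
def pieces (x : List ℕ) (ls : List ℕ) : List (List ℕ) :=
  ((0 :: ls).zip (ls ++ [rk x])).map fun p => corestrict x (Finset.Icc (p.1 + 1) p.2)

/-- `x^{(l₁,…,l_p)}`. -/
def xfam (x : List ℕ) (ls : List ℕ) : List ℕ := catAll (pieces x ls)

variable (𝕂 : Type) [Field 𝕂]

/-- the vector space `𝕂[ST]` (with basis all words; only the basis elements in `ST` matter). -/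
abbrev V := List ℕ →₀ 𝕂

/-- the coproduct `Δ`. -/
noncomputable def Delta : V 𝕂 →ₗ[𝕂] TensorProduct 𝕂 (V 𝕂) (V 𝕂) :=
  Finsupp.lsum 𝕂 fun x => LinearMap.toSpanSingleton 𝕂 _
    (∑ i ∈ Finset.Ico 1 (rk x),
      Finsupp.single (corestrict x (Finset.Icc 1 i)) (1 : 𝕂) ⊗ₜ[𝕂]
        Finsupp.single (corestrict x (Finset.Icc (i + 1) (rk x))) (1 : 𝕂))

/-- the subspace `𝕂[ST_n]`. -/
noncomputable def STspanN (n : ℕ) : Submodule 𝕂 (V 𝕂) :=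
  Submodule.span 𝕂 {v | ∃ l, IsST l ∧ l.length = n ∧ v = Finsupp.single l 1}

/-- `Prim(ST)_n = {v ∈ 𝕂[ST_n] : Δ v = 0}`. -/
noncomputable def PrimN (n : ℕ) : Submodule 𝕂 (V 𝕂) :=
  STspanN 𝕂 n ⊓ LinearMap.ker (Delta 𝕂)

/-- the projection `E`. -/
noncomputable def Emap : V 𝕂 →ₗ[𝕂] V 𝕂 :=
  Finsupp.lsum 𝕂 fun x => LinearMap.toSpanSingleton 𝕂 _
    (∑ᶠ ls ∈ {ls : List ℕ | ls.Chain' (· < ·) ∧ ∀ l ∈ ls, 0 < l ∧ l < rk x},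
      ((-1 : 𝕂) ^ ls.length) • Finsupp.single (xfam x ls) (1 : 𝕂))

/-- generic bilinear-on-basis operation indexed by a set of shuffles. -/
noncomputable def shOp (P : ℕ → ℕ → List ℕ → Prop) (a b : V 𝕂) : V 𝕂 :=
  Finsupp.sum a fun x cx => Finsupp.sum b fun y cy =>
    (cx * cy) • ∑ᶠ f ∈ {f : List ℕ | IsShuffle [rk x, rk y] f ∧ P (rk x) (rk y) f},
      Finsupp.single (wcomp f (cat x y)) (1 : 𝕂)

/-- the dendriform operation `≻`. -/
noncomputable def succOp : V 𝕂 → V 𝕂 → V 𝕂 :=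
  shOp 𝕂 fun r s f => ent f r < ent f (r + s)

/-- the dendriform operation `≺`. -/
noncomputable def precOp : V 𝕂 → V 𝕂 → V 𝕂 :=
  shOp 𝕂 fun r s f => ent f (r + s) < ent f r

/-- `ω^≺(y₁,…,y_k) = y₁ ≺ (y₂ ≺ (… ≺ y_k))`. -/
noncomputable def omPrec : List (V 𝕂) → V 𝕂
  | [] => 0
  | [a] => a
  | a :: as => precOp 𝕂 a (omPrec as)

/-- `ω^≻(y₁,…,y_k) = ((y₁ ≻ y₂) ≻ …) ≻ y_k`. -/
noncomputable def omSucc : List (V 𝕂) → V 𝕂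
  | [] => 0
  | a :: as => as.foldl (succOp 𝕂) a

/-- `ω^≺(l) ≻ x ≺ ω^≻(r)`, empty factors omitted. -/
noncomputable def mterm (x : V 𝕂) : List (V 𝕂) → List (V 𝕂) → V 𝕂
  | [], [] => x
  | [], r => precOp 𝕂 x (omSucc 𝕂 r)
  | l, [] => succOp 𝕂 (omPrec 𝕂 l) x
  | l, r => precOp 𝕂 (succOp 𝕂 (omPrec 𝕂 l) x) (omSucc 𝕂 r)

/-- the brace operation `M^{ST}_{1k}(x; y₁,…,y_k)`. -/
noncomputable def braceM (x : V 𝕂) (ys : List (V 𝕂)) : V 𝕂 :=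
  ∑ j ∈ Finset.range (ys.length + 1),
    ((-1 : 𝕂) ^ (ys.length - j)) • mterm 𝕂 x (ys.take j) (ys.drop j)

/-- generic bilinear-on-basis operation indexed by a set of stuffles, with `q`-weights
    `q^{s(f) - c}` where `s(f) = |f| - rk f`. -/
noncomputable def stOp (q : 𝕂) (c : ℕ) (P : ℕ → ℕ → List ℕ → Prop) (a b : V 𝕂) : V 𝕂 :=
  Finsupp.sum a fun x cx => Finsupp.sum b fun y cy =>
    (cx * cy) • ∑ᶠ f ∈ {f : List ℕ | IsStuffle [rk x, rk y] f ∧ P (rk x) (rk y) f},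
      q ^ (f.length - rk f - c) • Finsupp.single (wcomp f (cat x y)) (1 : 𝕂)

/-- `≻_q`. -/
noncomputable def succQ (q : 𝕂) : V 𝕂 → V 𝕂 → V 𝕂 :=
  stOp 𝕂 q 0 fun r s f => ent f r < ent f (r + s)

/-- `≺_q`. -/
noncomputable def precQ (q : 𝕂) : V 𝕂 → V 𝕂 → V 𝕂 :=
  stOp 𝕂 q 0 fun r s f => ent f (r + s) < ent f r

/-- `·_q`. -/
noncomputable def dotQ (q : 𝕂) : V 𝕂 → V 𝕂 → V 𝕂 :=
  stOp 𝕂 q 1 fun r s f => ent f r = ent f (r + s)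

/-- `≽_q = ≻_q + q ·_q`. -/
noncomputable def succcQ (q : 𝕂) (a b : V 𝕂) : V 𝕂 := succQ 𝕂 q a b + q • dotQ 𝕂 q a b

/-- `ω^{≺_q}`. -/
noncomputable def omPrecQ (q : 𝕂) : List (V 𝕂) → V 𝕂
  | [] => 0
  | [a] => a
  | a :: as => precQ 𝕂 q a (omPrecQ q as)

/-- `ω^{≽_q}`. -/
noncomputable def omSucccQ (q : 𝕂) : List (V 𝕂) → V 𝕂
  | [] => 0
  | a :: as => as.foldl (succcQ 𝕂 q) a

/-- `ω^{≺_q}(l) ≽_q x ≺_q ω^{≽_q}(r)`, empty factors omitted. -/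
noncomputable def mtermQ (q : 𝕂) (x : V 𝕂) : List (V 𝕂) → List (V 𝕂) → V 𝕂
  | [], [] => x
  | [], r => precQ 𝕂 q x (omSucccQ 𝕂 q r)
  | l, [] => succcQ 𝕂 q (omPrecQ 𝕂 q l) x
  | l, r => precQ 𝕂 q (succcQ 𝕂 q (omPrecQ 𝕂 q l) x) (omSucccQ 𝕂 q r)

/-- the brace operation `M^{ST(q)}_{1k}`. -/
noncomputable def braceMQ (q : 𝕂) (x : V 𝕂) (ys : List (V 𝕂)) : V 𝕂 :=
  ∑ j ∈ Finset.range (ys.length + 1),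
    ((-1 : 𝕂) ^ (ys.length - j)) • mtermQ 𝕂 q x (ys.take j) (ys.drop j)

/-- the shuffle product of two basis elements. -/
noncomputable def shufSingle (x y : List ℕ) : V 𝕂 :=
  ∑ᶠ f ∈ {f : List ℕ | IsShuffle [rk x, rk y] f},
    Finsupp.single (wcomp f (cat x y)) (1 : 𝕂)

/-- the shuffle product `*` on `𝕂[ST]`, as a bilinear map. -/
noncomputable def shufL : V 𝕂 →ₗ[𝕂] V 𝕂 →ₗ[𝕂] V 𝕂 :=
  Finsupp.lsum 𝕂 fun x => LinearMap.toSpanSingleton 𝕂 _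
    (Finsupp.lsum 𝕂 fun y => LinearMap.toSpanSingleton 𝕂 _ (shufSingle 𝕂 x y))

/-- the augmented space `𝕂·1 ⊕ 𝕂[ST]`. -/
abbrev Vp := 𝕂 × V 𝕂

/-- inclusion `𝕂[ST] ↪ 𝕂·1 ⊕ 𝕂[ST]`. -/
noncomputable def inclV : V 𝕂 →ₗ[𝕂] Vp 𝕂 := LinearMap.inr 𝕂 𝕂 (V 𝕂)

/-- the unit `1`. -/
noncomputable def oneVp : Vp 𝕂 := (1, 0)

/-- the unital extension of the shuffle product to `𝕂·1 ⊕ 𝕂[ST]`, as a bilinear map: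
    `(a + x)(b + y) = ab + (a y + b x + x * y)`.  In particular `1 * u = u = u * 1`. -/
noncomputable def mulVp : Vp 𝕂 →ₗ[𝕂] Vp 𝕂 →ₗ[𝕂] Vp 𝕂 :=
  LinearMap.mk₂ 𝕂 (fun u v => (u.1 * v.1, u.1 • v.2 + v.1 • u.2 + shufL 𝕂 u.2 v.2))
    (fun u u' v => by
      refine Prod.ext ?_ ?_ <;>
        simp [add_mul, add_smul, smul_add, map_add, LinearMap.add_apply] <;> abel)
    (fun c u v => by
      refine Prod.ext ?_ ?_ <;>
        simp [mul_assoc, mul_smul, smul_add, smul_comm c v.1] <;> abel)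
    (fun u v v' => by
      refine Prod.ext ?_ ?_ <;>
        simp [mul_add, add_smul, smul_add, map_add, LinearMap.add_apply] <;> abel)
    (fun c u v => by
      refine Prod.ext ?_ ?_ <;>
        simp [mul_left_comm, mul_smul, smul_add, smul_comm c u.1] <;> abel)

/-- the extension `Δ⁺` of `Δ` to `𝕂·1 ⊕ 𝕂[ST]`, with `Δ⁺(1) = 1 ⊗ 1` and
    `Δ⁺(x) = x ⊗ 1 + 1 ⊗ x + Δ(x)` for `x ∈ 𝕂[ST]`. -/
noncomputable def DeltaP : Vp 𝕂 →ₗ[𝕂] TensorProduct 𝕂 (Vp 𝕂) (Vp 𝕂) :=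
  (LinearMap.toSpanSingleton 𝕂 _ (oneVp 𝕂 ⊗ₜ[𝕂] oneVp 𝕂)).comp (LinearMap.fst 𝕂 𝕂 (V 𝕂))
    + (((TensorProduct.mk 𝕂 (Vp 𝕂) (Vp 𝕂)).flip (oneVp 𝕂)).comp (inclV 𝕂)).comp
        (LinearMap.snd 𝕂 𝕂 (V 𝕂))
    + ((TensorProduct.mk 𝕂 (Vp 𝕂) (Vp 𝕂) (oneVp 𝕂)).comp (inclV 𝕂)).comp
        (LinearMap.snd 𝕂 𝕂 (V 𝕂))
    + ((TensorProduct.map (inclV 𝕂) (inclV 𝕂)).comp (Delta 𝕂)).comp (LinearMap.snd 𝕂 𝕂 (V 𝕂))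

/-- componentwise product on the tensor square: `(a⊗b)·(c⊗d) = (a·c)⊗(b·d)`. -/
noncomputable def mulTsq :
    TensorProduct 𝕂 (Vp 𝕂) (Vp 𝕂) →ₗ[𝕂]
      TensorProduct 𝕂 (Vp 𝕂) (Vp 𝕂) →ₗ[𝕂] TensorProduct 𝕂 (Vp 𝕂) (Vp 𝕂) :=
  TensorProduct.lift
    (((TensorProduct.mapBilinear (σ₁₂ := RingHom.id 𝕂) (M := Vp 𝕂) (N := Vp 𝕂)
        (M₂ := Vp 𝕂) (N₂ := Vp 𝕂)).comp (mulVp 𝕂)).compl₂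
      (mulVp 𝕂))

/-- concatenation on the right with a fixed word, linearized: `x ↦ x × y`. -/
noncomputable def catR (y : List ℕ) : V 𝕂 →ₗ[𝕂] V 𝕂 :=
  Finsupp.lsum 𝕂 fun x => LinearMap.toSpanSingleton 𝕂 _ (Finsupp.single (cat x y) (1 : 𝕂))

/-- concatenation on the left with a fixed word, linearized: `y ↦ x × y`. -/
noncomputable def catL (x : List ℕ) : V 𝕂 →ₗ[𝕂] V 𝕂 :=
  Finsupp.lsum 𝕂 fun y => LinearMap.toSpanSingleton 𝕂 _ (Finsupp.single (cat x y) (1 : 𝕂))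

/-- `Sh^•(r₁,…,r_p)`: surjections onto `{1,…,R-p+1}` (where `R = r₁+…+r_p`), strictly
    increasing on each block, attaining the maximal value exactly at the block ends, and whose
    corestriction to `{1,…,R-p}` is a `(r₁-1,…,r_p-1)`-shuffle. -/
def ShBull (rs : List ℕ) (f : List ℕ) : Prop :=
  memST f rs.sum (rs.sum - rs.length + 1) ∧ blockIncr rs f ∧
    (∀ i, 1 ≤ i → i ≤ rs.sum →
      (ent f i = rs.sum - rs.length + 1 ↔ ∃ k, k < rs.length ∧ i = (rs.take (k + 1)).sum)) ∧
    IsShuffle (rs.map (· - 1)) (corestrict f (Finset.Icc 1 (rs.sum - rs.length)))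


/-!
Up to shifting values, `x^{(l₁,…,l_p)}` is the stable rearrangement of the word `x` that lists
first its letters with values in `(0, l₁]`, then those in `(l₁, l₂]`, …, then those in
`(l_p, r]`. Being a permutation of `x`, it is again a surjection onto `{1,…,r}` with as many
occurrences of `r` as `x`.

Reversed, `𝕄(x)` is the list of lengths of the segments that follow the occurrences of `r` when
`x` is split at `r`. All occurrences of `r` in `x^{(l₁,…,l_p)}` lie in its last block, the
subword of `x` formed by the letters `> l_p`, and the segments of that subword are subwords of
the segments of `x`; so `𝕄` can only decrease, entry by entry.
-/

lemma le_rk_of_mem {l : List ℕ} {v : ℕ} (h : v ∈ l) : v ≤ rk l :=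
  List.le_max_of_le h le_rfl

lemma rk_le_of_forall_le {l : List ℕ} {m : ℕ} (h : ∀ v ∈ l, v ≤ m) : rk l ≤ m :=
  List.max_le_of_forall_le l m h

lemma rk_eq_of_perm {l₁ l₂ : List ℕ} (h : l₁.Perm l₂) : rk l₁ = rk l₂ :=
  le_antisymm (rk_le_of_forall_le fun _ hv => le_rk_of_mem (h.mem_iff.1 hv))
    (rk_le_of_forall_le fun _ hv => le_rk_of_mem (h.mem_iff.2 hv))

lemma IsST.of_perm {l₁ l₂ : List ℕ} (h : l₁.Perm l₂) (hl₂ : IsST l₂) : IsST l₁ := by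
  refine ⟨fun h₁ => hl₂.1 (List.Perm.eq_nil (h₁ ▸ h.symm)), fun k => ?_⟩
  rw [h.mem_iff, rk_eq_of_perm h]
  exact hl₂.2 k

lemma maxPos_eq_idxsOf (z : List ℕ) : maxPos z = z.idxsOf (rk z) := by
  refine List.Pairwise.eq_of_mem_iff (r := (· < ·)) (List.pairwise_lt_range.filter _)
    List.pairwise_idxsOf fun i => ?_
  simp only [maxPos, List.mem_filter, List.mem_range, List.getD_eq_getElem?_getD,
    List.mem_idxsOf_iff_exists_getElem_pos, beq_iff_eq, decide_eq_true_eq]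
  grind

lemma lam_eq_count (z : List ℕ) : lam z = z.count (rk z) := by
  rw [lam, maxPos_eq_idxsOf, List.length_idxsOf]

section SplitOn

variable {α : Type*} [BEq α] [LawfulBEq α]

theorem _root_.List.idxsOf_cons_self (r : α) (t : List α) (s : ℕ) :
    (r :: t).idxsOf r s = s :: t.idxsOf r (s + 1) := by
  simp

theorem _root_.List.idxsOf_cons_of_ne {a r : α} (h : a ≠ r) (t : List α) (s : ℕ) :
    (a :: t).idxsOf r s = t.idxsOf r (s + 1) := by
  simp [h]

theorem _root_.List.idxsOf_eq_nil_iff_not_mem {r : α} {t : List α} {s : ℕ} :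
    t.idxsOf r s = [] ↔ r ∉ t := by
  simp only [List.idxsOf_eq_nil_iff, beq_eq_false_iff_ne]
  exact ⟨fun h hr => h r hr rfl, fun h y hy hyr => h (hyr ▸ hy)⟩

theorem _root_.List.splitOn_cons_self (r : α) (t : List α) :
    (r :: t).splitOn r = [] :: t.splitOn r := by
  simp [List.splitOn_cons_eq_if_modifyHead]

theorem _root_.List.splitOn_cons_of_ne {a r : α} (h : a ≠ r) (t : List α) :
    (a :: t).splitOn r = (t.splitOn r).modifyHead (a :: ·) := by
  simp [List.splitOn_cons_eq_if_modifyHead, h]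

theorem _root_.List.splitOn_filter {p : α → Bool} {r : α} (hp : p r) (z : List α) :
    (z.filter p).splitOn r = (z.splitOn r).map (List.filter p) := by
  induction z with
  | nil => simp [List.splitOn_nil]
  | cons a t ih =>
    by_cases har : a = r
    · subst har
      simp [hp, List.splitOn_cons_self, ih]
    · obtain ⟨seg, rest, hsplit⟩ := List.exists_cons_of_ne_nil (List.splitOn_ne_nil r t)
      by_cases hpa : p a <;> simp [hpa, List.splitOn_cons_of_ne har, ih, hsplit]

theorem _root_.List.tail_splitOn_append {r : α} {P : List α} (hP : r ∉ P) (F : List α) :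
    ((P ++ F).splitOn r).tail = (F.splitOn r).tail := by
  induction P with
  | nil => rfl
  | cons a t ih =>
    rw [List.mem_cons, not_or] at hP
    rw [List.cons_append, List.splitOn_cons_of_ne (Ne.symm hP.1), List.tail_modifyHead, ih hP.2]

theorem _root_.List.headD_idxsOf {r : α} {z : List α} (hr : r ∈ z) (s : ℕ) :
    (z.idxsOf r s).headD 0 = s + ((z.splitOn r).headD []).length := by
  induction z generalizing s with
  | nil => simp at hr
  | cons a t ih =>
    by_cases har : a = r
    · subst har
      simp [List.splitOn_cons_self]
    · have hrt : r ∈ t := (List.mem_cons.1 hr).resolve_left (Ne.symm har)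
      obtain ⟨seg, rest, hsplit⟩ := List.exists_cons_of_ne_nil (List.splitOn_ne_nil r t)
      rw [List.idxsOf_cons_of_ne har, ih hrt, List.splitOn_cons_of_ne har, hsplit]
      simp only [List.headD_cons, List.modifyHead_cons, List.length_cons]
      omega

theorem _root_.List.map_length_tail_splitOn {r : α} {z : List α} (hr : r ∈ z) (s : ℕ) :
    (z.splitOn r).tail.map List.length =
      List.zipWith (fun a b => b - a - 1) (z.idxsOf r s) ((z.idxsOf r s).drop 1) ++
        [z.length + s - (z.idxsOf r s).getLastD 0 - 1] := by
  induction z generalizing s with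
  | nil => simp at hr
  | cons a t ih =>
    by_cases har : a = r
    · subst har
      rw [List.idxsOf_cons_self, List.splitOn_cons_self, List.tail_cons]
      by_cases hat : a ∈ t
      · obtain ⟨i, is, hidx⟩ :=
          List.exists_cons_of_ne_nil (mt List.idxsOf_eq_nil_iff_not_mem.1 (not_not.2 hat))
        obtain ⟨seg, rest, hsplit⟩ := List.exists_cons_of_ne_nil (List.splitOn_ne_nil a t)
        have hhead := List.headD_idxsOf hat (s + 1)
        have htail := ih hat (s + 1)
        rw [hidx, hsplit] at hhead htail ⊢
        simp only [List.drop_one, List.tail_cons, List.zipWith_cons_cons, List.getLastD_cons,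
          List.length_cons, List.map_cons, List.cons_append, List.cons.injEq, List.headD_cons]
          at hhead htail ⊢
        refine ⟨by omega, ?_⟩
        rw [htail, Nat.add_right_comm, Nat.add_assoc]
      · rw [List.idxsOf_eq_nil_iff_not_mem.2 hat, List.splitOn_eq_singleton hat]
        simp
    · have hrt : r ∈ t := (List.mem_cons.1 hr).resolve_left (Ne.symm har)
      rw [List.idxsOf_cons_of_ne har, List.splitOn_cons_of_ne har, List.tail_modifyHead,
        ih hrt (s + 1), List.length_cons, Nat.add_right_comm, Nat.add_assoc]

end SplitOn

theorem _root_.List.eq_or_lex_of_forall₂_le {α : Type*} [PartialOrder α] {a b : List α}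
    (h : List.Forall₂ (· ≤ ·) a b) : a = b ∨ List.Lex (· < ·) a b := by
  induction h with
  | nil => exact Or.inl rfl
  | @cons x y _ _ hxy _ ih =>
    rcases hxy.eq_or_lt with rfl | hlt
    · exact ih.imp (congrArg _) List.Lex.cons
    · exact Or.inr (List.Lex.rel hlt)

lemma Mword_eq_reverse_splitOn {z : List ℕ} (hz : rk z ∈ z) :
    Mword z = ((z.splitOn (rk z)).tail.map List.length).reverse := by
  rw [Mword, maxPos_eq_idxsOf, List.map_length_tail_splitOn hz 0]
  rfl

lemma forall₂_Mword_append_filter {x P : List ℕ} {p : ℕ → Bool} (hx : rk x ∈ x)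
    (hP : rk x ∉ P) (hp : p (rk x)) (hrk : rk (P ++ x.filter p) = rk x) :
    List.Forall₂ (· ≤ ·) (Mword (P ++ x.filter p)) (Mword x) := by
  have hmem : rk x ∈ P ++ x.filter p := List.mem_append_right P (List.mem_filter.2 ⟨hx, hp⟩)
  rw [Mword_eq_reverse_splitOn (hrk ▸ hmem), Mword_eq_reverse_splitOn hx, hrk,
    List.tail_splitOn_append hP, List.splitOn_filter hp, List.forall₂_reverse_iff,
    ← List.map_tail, List.map_map]
  exact List.forall₂_map_left_iff.2 (List.forall₂_map_right_iff.2
    (List.forall₂_same.2 fun l _ => List.length_filter_le p l))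

def valueBlocks (x : List ℕ) : ℕ → List ℕ → ℕ → List ℕ
  | a, [], b => x.filter (· ∈ Finset.Icc (a + 1) b)
  | a, l :: t, b => x.filter (· ∈ Finset.Icc (a + 1) l) ++ valueBlocks x l t b

section ValueBlocks

variable {x : List ℕ}

lemma IsST.mem_filter_Icc (hx : IsST x) {a b u : ℕ} (hb : b ≤ rk x) :
    u ∈ x.filter (· ∈ Finset.Icc (a + 1) b) ↔ a + 1 ≤ u ∧ u ≤ b := by
  simp only [List.mem_filter, Finset.mem_Icc, decide_eq_true_eq, and_iff_right_iff_imp]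
  exact fun h => (hx.2 u).2 ⟨by omega, h.2.trans hb⟩

lemma IsST.rk_pos (hx : IsST x) : 0 < rk x := by
  obtain ⟨v, hv⟩ := List.exists_mem_of_ne_nil x hx.1
  have := (hx.2 v).1 hv
  omega

lemma IsST.rk_mem (hx : IsST x) : rk x ∈ x :=
  (hx.2 _).2 ⟨hx.rk_pos, le_rfl⟩

lemma IsST.filter_Icc_one_rk (hx : IsST x) : x.filter (· ∈ Finset.Icc 1 (rk x)) = x :=
  List.filter_eq_self.2 fun v hv => by simpa using (hx.2 v).1 hv

lemma IsST.corestrict_Icc (hx : IsST x) {a b : ℕ} (hb : b ≤ rk x) :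
    corestrict x (Finset.Icc (a + 1) b) =
      (x.filter (· ∈ Finset.Icc (a + 1) b)).map (· - a) := by
  refine List.map_congr_left fun v hv => ?_
  have hv' := (hx.mem_filter_Icc hb).1 hv
  have htoFinset : ((x.filter (· ∈ Finset.Icc (a + 1) b)).dedup.filter (· ≤ v)).toFinset =
      Finset.Icc (a + 1) v := by
    ext u
    rw [List.mem_toFinset, List.mem_filter, List.mem_dedup, hx.mem_filter_Icc hb,
      decide_eq_true_eq, Finset.mem_Icc]
    omega
  have hcard := congrArg Finset.card htoFinset
  rw [List.toFinset_card_of_nodup ((List.nodup_dedup _).filter _), Nat.card_Icc] at hcard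
  omega

lemma IsST.rk_corestrict_Icc (hx : IsST x) {a b : ℕ} (hab : a < b) (hb : b ≤ rk x) :
    rk (corestrict x (Finset.Icc (a + 1) b)) = b - a := by
  rw [hx.corestrict_Icc hb]
  refine le_antisymm (rk_le_of_forall_le fun v hv => ?_) (le_rk_of_mem ?_)
  · obtain ⟨u, hu, rfl⟩ := List.mem_map.1 hv
    have := (hx.mem_filter_Icc hb).1 hu
    omega
  · exact List.mem_map.2 ⟨b, (hx.mem_filter_Icc hb).2 ⟨by omega, le_rfl⟩, by omega⟩

lemma lt_of_mem_valueBlocks {a b v : ℕ} {ls : List ℕ} (hch : (a :: ls).IsChain (· < ·))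
    (hv : v ∈ valueBlocks x a ls b) : a < v := by
  induction ls generalizing a with
  | nil =>
    simp only [valueBlocks, List.mem_filter, Finset.mem_Icc, decide_eq_true_eq] at hv
    omega
  | cons l t ih =>
    rw [List.isChain_cons_cons] at hch
    rcases List.mem_append.1 hv with hv | hv
    · simp only [List.mem_filter, Finset.mem_Icc, decide_eq_true_eq] at hv
      omega
    · exact hch.1.trans (ih hch.2 hv)

lemma IsST.catAll_corestrict_Icc (hx : IsST x) {a b : ℕ} {ls : List ℕ}
    (hch : (a :: ls).IsChain (· < ·)) (hls : ∀ l ∈ ls, l < b) (hab : a < b)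
    (hb : b ≤ rk x) :
    catAll (((a :: ls).zip (ls ++ [b])).map fun p => corestrict x (Finset.Icc (p.1 + 1) p.2)) =
      (valueBlocks x a ls b).map (· - a) := by
  induction ls generalizing a with
  | nil =>
    simp [catAll, cat, valueBlocks, hx.corestrict_Icc hb]
  | cons l t ih =>
    rw [List.isChain_cons_cons] at hch
    have hlb : l < b := hls l List.mem_cons_self
    have ih' := ih hch.2 (fun l' hl' => hls l' (List.mem_cons_of_mem l hl')) hlb
    simp only [List.cons_append, List.zip_cons_cons, List.map_cons] at ih' ⊢
    rw [catAll, List.foldr_cons, ← catAll, ih', cat, hx.rk_corestrict_Icc hch.1 (hlb.le.trans hb),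
      hx.corestrict_Icc (hlb.le.trans hb), valueBlocks, List.map_append, List.map_map]
    congr 1
    refine List.map_congr_left fun v hv => ?_
    have := lt_of_mem_valueBlocks hch.2 hv
    simp only [Function.comp]
    omega

lemma IsST.xfam_eq_valueBlocks (hx : IsST x) {ls : List ℕ} (hch : (0 :: ls).IsChain (· < ·))
    (hls : ∀ l ∈ ls, l < rk x) : xfam x ls = valueBlocks x 0 ls (rk x) := by
  rw [xfam, pieces, hx.catAll_corestrict_Icc hch hls hx.rk_pos le_rfl]
  simp

lemma valueBlocks_perm {a b : ℕ} {ls : List ℕ} (hch : (a :: ls).IsChain (· < ·))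
    (hls : ∀ l ∈ ls, l ≤ b) :
    (valueBlocks x a ls b).Perm (x.filter (· ∈ Finset.Icc (a + 1) b)) := by
  induction ls generalizing a with
  | nil => exact List.Perm.refl _
  | cons l t ih =>
    rw [List.isChain_cons_cons] at hch
    have hlb : l ≤ b := hls l List.mem_cons_self
    have hsplit := List.filter_append_perm (fun v => decide (v ≤ l))
      (x.filter (· ∈ Finset.Icc (a + 1) b))
    have hlow : (x.filter (· ∈ Finset.Icc (a + 1) b)).filter (fun v => decide (v ≤ l)) =
        x.filter (· ∈ Finset.Icc (a + 1) l) := by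
      rw [List.filter_filter]
      exact List.filter_congr fun v _ => by
        rw [Bool.eq_iff_iff]
        simp only [Bool.and_eq_true, decide_eq_true_eq, Finset.mem_Icc]
        omega
    have hhigh : (x.filter (· ∈ Finset.Icc (a + 1) b)).filter (fun v => !decide (v ≤ l)) =
        x.filter (· ∈ Finset.Icc (l + 1) b) := by
      rw [List.filter_filter]
      exact List.filter_congr fun v _ => by
        rw [Bool.eq_iff_iff]
        simp only [Bool.and_eq_true, Bool.not_eq_true', decide_eq_true_eq, decide_eq_false_iff_not,
          Finset.mem_Icc]
        omega
    rw [hlow, hhigh] at hsplit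
    exact ((ih hch.2 fun l' hl' => hls l' (List.mem_cons_of_mem l hl')).append_left _).trans hsplit

lemma exists_valueBlocks_eq_append {a b : ℕ} {ls : List ℕ} (hab : a < b)
    (hls : ∀ l ∈ ls, l < b) : ∃ P c, b ∉ P ∧ c < b ∧
      valueBlocks x a ls b = P ++ x.filter (· ∈ Finset.Icc (c + 1) b) := by
  induction ls generalizing a with
  | nil => exact ⟨[], a, List.not_mem_nil, hab, rfl⟩
  | cons l t ih =>
    obtain ⟨P, c, hP, hc, heq⟩ :=
      ih (hls l List.mem_cons_self) fun l' hl' => hls l' (List.mem_cons_of_mem l hl')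
    refine ⟨x.filter (· ∈ Finset.Icc (a + 1) l) ++ P, c, ?_, hc,
      by rw [valueBlocks, heq, List.append_assoc]⟩
    have := hls l List.mem_cons_self
    simp only [List.mem_append, List.mem_filter, Finset.mem_Icc, decide_eq_true_eq, not_or]
    exact ⟨fun h => by omega, hP⟩

end ValueBlocks

theorem statement_10_general (x : List ℕ) (n r : ℕ) (hx : memST x n r) (ls : List ℕ)
    (hchain : ls.Chain' (· < ·)) (hbd : ∀ l ∈ ls, 0 < l ∧ l < r) :
    memST (xfam x ls) n r ∧ lam (xfam x ls) = lam x ∧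
      (Mword (xfam x ls) = Mword x ∨ List.Lex (· < ·) (Mword (xfam x ls)) (Mword x)) := by
  obtain ⟨hxST, rfl, rfl⟩ := hx
  have hch : (0 :: ls).IsChain (· < ·) := by
    cases ls with
    | nil => exact List.isChain_singleton 0
    | cons l t => exact List.isChain_cons_cons.2 ⟨(hbd l List.mem_cons_self).1, hchain⟩
  have hls : ∀ l ∈ ls, l < rk x := fun l hl => (hbd l hl).2
  have hxf := hxST.xfam_eq_valueBlocks hch hls
  have hperm : (xfam x ls).Perm x := by
    have := valueBlocks_perm (x := x) hch fun l hl => (hls l hl).le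
    rwa [zero_add, hxST.filter_Icc_one_rk, ← hxf] at this
  have hrk : rk (xfam x ls) = rk x := rk_eq_of_perm hperm
  obtain ⟨P, c, hP, hc, hsplit⟩ := exists_valueBlocks_eq_append (x := x) hxST.rk_pos hls
  refine ⟨⟨hxST.of_perm hperm, hperm.length_eq, hrk⟩, ?_, ?_⟩
  · rw [lam_eq_count, lam_eq_count, hrk, hperm.count_eq]
  · rw [hxf, hsplit] at hrk ⊢
    exact List.eq_or_lex_of_forall₂_le (forall₂_Mword_append_filter hxST.rk_mem hP
      (decide_eq_true (Finset.mem_Icc.2 ⟨hc, le_rfl⟩)) hrk)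

/-- for `x ∈ ST_n^r` and `0 < l₁ < … < l_p < r` (`p ≥ 1`), the element
`x^{(l₁,…,l_p)}` lies in `ST_n^r`, has the same `λ`, and `𝕄(x^{(l₁,…,l_p)}) ≤ 𝕄(x)`
for the lexicographic order. -/
theorem statement_10 (x : List ℕ) (n r : ℕ) (hx : memST x n r) (ls : List ℕ) (hne : ls ≠ [])
    (hchain : ls.Chain' (· < ·)) (hbd : ∀ l ∈ ls, 0 < l ∧ l < r) :
    memST (xfam x ls) n r ∧ lam (xfam x ls) = lam x ∧
      (Mword (xfam x ls) = Mword x ∨ List.Lex (· < ·) (Mword (xfam x ls)) (Mword x)) :=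
  statement_10_general x n r hx ls hchain hbd

end SurjPerm
end

section
/- Let x ∈ ST_n^r be indecomposable, let y ∈ ST_m^s, and let f ∈ Sh^≺(r,s). Then f∘(x×y) is indecomposable. -/
open scoped TensorProduct

namespace SurjPerm

variable (𝕂 : Type) [Field 𝕂]

/-! In a product `a · b` the maximal letter occurs in both factors, the letters of the first
factor are either maximal or smaller than `rk a`, and those of the second factor are at least
`rk a`; conversely any such cut `(p, u)` of a surjection splits it as a product.

Let `z = f ∘ (x × y)` with `f ∈ Sh^≺(r, s)`, so `f(r) = r + s`: the maximal letter of `z` comes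
only from the letters `r` of `x`. A cut `(p, u)` of `z` must then lie inside the `x` part, and
`f` sends the whole block `(r, r + s]` to values `≥ u`. Since `f` is increasing on `[1, r]` and
bijective, it fixes every value below `u`, so `(p, u)` is also a cut of `x`. -/

lemma rk_le_iff {l : List ℕ} {R : ℕ} : rk l ≤ R ↔ ∀ k ∈ l, k ≤ R := by
  induction l with
  | nil => simp [rk]
  | cons a t ih => simp [rk, ← ih]

lemma le_rk {l : List ℕ} {k : ℕ} (h : k ∈ l) : k ≤ rk l :=
  rk_le_iff.1 le_rfl k h

lemma isST_and_rk_eq_iff {l : List ℕ} {R : ℕ} :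
    IsST l ∧ rk l = R ↔ 1 ≤ R ∧ ∀ k, k ∈ l ↔ k ∈ Set.Icc 1 R := by
  constructor
  · rintro ⟨⟨hne, hmem⟩, rfl⟩
    obtain ⟨k, hk⟩ := List.exists_mem_of_ne_nil l hne
    exact ⟨le_trans ((hmem k).1 hk).1 ((hmem k).1 hk).2, hmem⟩
  · rintro ⟨hR, hmem⟩
    have hRl : R ∈ l := (hmem R).2 ⟨hR, le_rfl⟩
    have hrk : rk l = R := le_antisymm (rk_le_iff.2 fun k hk => ((hmem k).1 hk).2) (le_rk hRl)
    exact ⟨⟨List.ne_nil_of_mem hRl, fun k => hrk ▸ hmem k⟩, hrk⟩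

lemma IsST.one_le_rk {l : List ℕ} (h : IsST l) : 1 ≤ rk l :=
  (isST_and_rk_eq_iff.1 ⟨h, rfl⟩).1

lemma IsST.mem_iff {l : List ℕ} (h : IsST l) {k : ℕ} : k ∈ l ↔ k ∈ Set.Icc 1 (rk l) :=
  h.2 k

lemma ent_le_rk (l : List ℕ) (i : ℕ) : ent l i ≤ rk l := by
  rw [ent, List.getD_eq_getElem?_getD]
  cases h : l[i - 1]? with
  | none => simp
  | some k => exact le_rk (List.mem_of_getElem? h)

lemma ent_mem {l : List ℕ} {i : ℕ} (h1 : 1 ≤ i) (h2 : i ≤ l.length) : ent l i ∈ l := by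
  rw [ent, List.getD_eq_getElem?_getD, List.getElem?_eq_getElem (by omega)]
  exact List.getElem_mem _

lemma exists_ent_eq_of_mem {l : List ℕ} {k : ℕ} (h : k ∈ l) :
    ∃ i ∈ Set.Icc 1 l.length, ent l i = k := by
  obtain ⟨j, hj, rfl⟩ := List.getElem_of_mem h
  refine ⟨j + 1, ⟨by omega, by omega⟩, ?_⟩
  simp [ent, List.getD_eq_getElem?_getD, List.getElem?_eq_getElem hj]

lemma IsST.bijOn_ent {f : List ℕ} (hf : IsST f) (hfrk : rk f = f.length) :
    Set.BijOn (ent f) (Set.Icc 1 f.length) (Set.Icc 1 f.length) := by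
  have hmaps : Set.MapsTo (ent f) (Set.Icc 1 f.length) (Set.Icc 1 f.length) :=
    fun i hi => hfrk ▸ hf.mem_iff.1 (ent_mem hi.1 hi.2)
  refine ((Set.finite_Icc _ _).surjOn_iff_bijOn_of_mapsTo hmaps).1 fun k hk => ?_
  exact exists_ent_eq_of_mem (hf.mem_iff.2 (hfrk ▸ hk))

lemma isST_cat {x y : List ℕ} (hx : IsST x) (hy : IsST y) :
    IsST (cat x y) ∧ rk (cat x y) = rk x + rk y := by
  have := hx.one_le_rk
  refine isST_and_rk_eq_iff.2 ⟨by omega, fun k => ?_⟩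
  simp only [cat, List.mem_append, List.mem_map, hx.mem_iff, hy.mem_iff, Set.mem_Icc]
  constructor
  · rintro (h | ⟨w, hw, rfl⟩) <;> omega
  · intro hk
    by_cases hkx : k ≤ rk x
    · exact Or.inl ⟨hk.1, hkx⟩
    · exact Or.inr ⟨k - rk x, by omega, by omega⟩

lemma isST_wcomp {f w : List ℕ} (hf : IsST f) (hfrk : rk f = f.length) (hw : IsST w)
    (hwrk : rk w = f.length) :
    IsST (wcomp f w) ∧ rk (wcomp f w) = f.length := by
  refine isST_and_rk_eq_iff.2 ⟨hfrk ▸ hf.one_le_rk, fun k => ?_⟩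
  rw [← (hf.bijOn_ent hfrk).image_eq]
  simp only [wcomp, List.mem_map, Set.mem_image, hw.mem_iff, hwrk]

lemma isST_dotW {a b : List ℕ} (ha : IsST a) (hb : IsST b) :
    IsST (dotW a b) ∧ rk (dotW a b) = rk a + rk b - 1 := by
  have := ha.one_le_rk
  have := hb.one_le_rk
  refine isST_and_rk_eq_iff.2 ⟨by omega, fun k => ?_⟩
  simp only [dotW, List.mem_append, List.mem_map, ha.mem_iff, hb.mem_iff, Set.mem_Icc]
  constructor
  · rintro (⟨w, hw, rfl⟩ | ⟨w, hw, rfl⟩) <;> split_ifs <;> omega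
  · intro hk
    by_cases hka : k < rk a
    · exact Or.inl ⟨k, ⟨hk.1, hka.le⟩, if_pos hka⟩
    by_cases hkb : k < rk a + rk b - 1
    · exact Or.inr ⟨k + 1 - rk a, ⟨by omega, by omega⟩, by rw [if_pos (by omega)]; omega⟩
    · exact Or.inl ⟨rk a, ⟨by omega, le_rfl⟩, by rw [if_neg (lt_irrefl _)]; omega⟩

/-- `(p, u)` is a cut of `l` when `l = a · b` can be read off with `a.length = p` and
`rk a = u`. -/
def IsDotCut (l : List ℕ) (p u : ℕ) : Prop :=
  1 ≤ u ∧ (∀ w ∈ l.take p, w < u ∨ w = rk l) ∧ (∀ w ∈ l.drop p, u ≤ w) ∧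
    rk l ∈ l.take p ∧ rk l ∈ l.drop p

lemma isDotCut_dotW {a b : List ℕ} (ha : IsST a) (hb : IsST b) :
    IsDotCut (dotW a b) a.length (rk a) := by
  have := ha.one_le_rk
  have := hb.one_le_rk
  rw [IsDotCut, (isST_dotW ha hb).2, dotW, List.take_left' (List.length_map _),
    List.drop_left' (List.length_map _)]
  simp only [List.mem_map, forall_exists_index, and_imp, forall_apply_eq_imp_iff₂]
  refine ⟨ha.one_le_rk, fun w hw => ?_, fun w hw => ?_, ⟨rk a, ?_⟩, ⟨rk b, ?_⟩⟩
  · split_ifs <;> omega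
  · have := (hb.mem_iff.1 hw).1
    split_ifs <;> omega
  · exact ⟨ha.mem_iff.2 ⟨ha.one_le_rk, le_rfl⟩, by simp⟩
  · exact ⟨hb.mem_iff.2 ⟨hb.one_le_rk, le_rfl⟩, by simp⟩

section IsDotCut

variable {l : List ℕ} {p u : ℕ}

lemma IsDotCut.mem_take {k : ℕ} (hcut : IsDotCut l p u) (hk : k ∈ l) (hku : k < u) :
    k ∈ l.take p := by
  rw [← List.take_append_drop p l, List.mem_append] at hk
  exact hk.resolve_right fun hk' => absurd (hcut.2.2.1 k hk') (by omega)

lemma IsDotCut.mem_drop {k : ℕ} (hcut : IsDotCut l p u) (hk : k ∈ l) (hku : u ≤ k)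
    (hkl : k < rk l) : k ∈ l.drop p := by
  rw [← List.take_append_drop p l, List.mem_append] at hk
  exact hk.resolve_left fun hk' => by have := hcut.2.1 k hk'; omega

lemma IsDotCut.isST_map_take (hl : IsST l) (hcut : IsDotCut l p u) :
    IsST ((l.take p).map fun w => if w < u then w else u) ∧
      rk ((l.take p).map fun w => if w < u then w else u) = u := by
  have hu := hcut.1
  have huR : u ≤ rk l := hcut.2.2.1 _ hcut.2.2.2.2
  refine isST_and_rk_eq_iff.2 ⟨hcut.1, fun k => ⟨?_, fun hk => ?_⟩⟩ <;>
    simp only [List.mem_map]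
  · rintro ⟨w, hw, rfl⟩
    have := (hl.mem_iff.1 (List.mem_of_mem_take hw)).1
    split_ifs <;> constructor <;> omega
  · rcases hk.2.lt_or_eq with hku | rfl
    · exact ⟨k, hcut.mem_take (hl.mem_iff.2 ⟨hk.1, by omega⟩) hku, if_pos hku⟩
    · exact ⟨rk l, hcut.2.2.2.1, if_neg (by omega)⟩

lemma IsDotCut.isST_map_drop (hl : IsST l) (hcut : IsDotCut l p u) :
    IsST ((l.drop p).map fun w => w - (u - 1)) ∧
      rk ((l.drop p).map fun w => w - (u - 1)) = rk l - u + 1 := by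
  have hu := hcut.1
  have huR : u ≤ rk l := hcut.2.2.1 _ hcut.2.2.2.2
  refine isST_and_rk_eq_iff.2 ⟨by omega, fun k => ⟨?_, fun ⟨hk1, hk2⟩ => ?_⟩⟩ <;>
    simp only [List.mem_map]
  · rintro ⟨w, hw, rfl⟩
    obtain ⟨-, hwR⟩ := hl.mem_iff.1 (List.mem_of_mem_drop hw)
    have := hcut.2.2.1 w hw
    constructor <;> omega
  · refine ⟨k + u - 1, ?_, by omega⟩
    rcases (show k + u - 1 < rk l ∨ k + u - 1 = rk l by omega) with hlt | heq
    · exact hcut.mem_drop (hl.mem_iff.2 ⟨by omega, hlt.le⟩) (by omega) hlt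
    · exact heq ▸ hcut.2.2.2.2

lemma exists_dotW_of_isDotCut (hl : IsST l) (hcut : IsDotCut l p u) :
    ∃ a b, IsST a ∧ IsST b ∧ l = dotW a b := by
  have hu := hcut.1
  obtain ⟨ha, hau⟩ := hcut.isST_map_take hl
  obtain ⟨hb, hbv⟩ := hcut.isST_map_drop hl
  refine ⟨_, _, ha, hb, ?_⟩
  conv_lhs => rw [← List.take_append_drop p l]
  rw [dotW, hau, hbv, List.map_map, List.map_map]
  congr 1 <;> refine ((List.map_congr_left fun w hw => ?_).trans (List.map_id _)).symm
  · have := hcut.2.1 w hw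
    simp only [Function.comp_apply, id]
    split_ifs <;> omega
  · obtain ⟨-, hwR⟩ := hl.mem_iff.1 (List.mem_of_mem_drop hw)
    have := hcut.2.2.1 w hw
    simp only [Function.comp_apply, id]
    split_ifs <;> omega

end IsDotCut

lemma indec_iff {l : List ℕ} : Indec l ↔ IsST l ∧ ∀ p u, ¬ IsDotCut l p u := by
  refine and_congr_right fun hl => ⟨fun h p u hcut => h (exists_dotW_of_isDotCut hl hcut), ?_⟩
  rintro h ⟨a, b, ha, hb, rfl⟩
  exact h _ _ (isDotCut_dotW ha hb)

lemma IsDotCut.le_length_left {l₁ l₂ : List ℕ} {p u : ℕ} (h : IsDotCut (l₁ ++ l₂) p u)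
    (hmax : rk (l₁ ++ l₂) ∉ l₂) : p ≤ l₁.length := by
  by_contra hp
  have hmaxr := h.2.2.2.2
  rw [List.drop_append, List.drop_eq_nil_of_le (by omega), List.nil_append] at hmaxr
  exact hmax (List.mem_of_mem_drop hmaxr)

section Shuffle

variable {r s : ℕ} {f : List ℕ}

lemma IsShuffle.length_eq (hf : IsShuffle [r, s] f) : f.length = r + s := by
  simpa using hf.1.2.1

lemma IsShuffle.bijOn_ent (hf : IsShuffle [r, s] f) :
    Set.BijOn (ent f) (Set.Icc 1 (r + s)) (Set.Icc 1 (r + s)) :=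
  hf.length_eq ▸ hf.1.1.bijOn_ent (by rw [hf.2, hf.length_eq]; simp)

lemma IsShuffle.strictMonoOn_left (hf : IsShuffle [r, s] f) :
    StrictMonoOn (ent f) (Set.Icc 1 r) :=
  fun i hi j hj hij => hf.1.2.2 0 (by simp) i j (by simp; exact hi.1) hij (by simpa using hj.2)

lemma IsShuffle.strictMonoOn_right (hf : IsShuffle [r, s] f) :
    StrictMonoOn (ent f) (Set.Icc (r + 1) (r + s)) :=
  fun i hi j hj hij => hf.1.2.2 1 (by simp) i j (by simpa using hi.1) hij (by simpa using hj.2)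

lemma IsShuffle.eq_of_ent_eq_add (hf : IsShuffle [r, s] f) (hfp : ent f (r + s) < ent f r)
    {i : ℕ} (hi : i ∈ Set.Icc 1 (r + s)) (hfi : ent f i = r + s) : i = r := by
  have hfr : ent f r ≤ r + s := by simpa [hf.2] using ent_le_rk f r
  rcases lt_trichotomy i r with hir | rfl | hri
  · have := hf.strictMonoOn_left ⟨hi.1, hir.le⟩ ⟨by omega, le_rfl⟩ hir
    omega
  · rfl
  · rcases hi.2.lt_or_eq with his | rfl
    · have := hf.strictMonoOn_right ⟨hri, his.le⟩ ⟨by omega, le_rfl⟩ his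
      omega
    · omega

end Shuffle

lemma le_of_strictMonoOn_Icc {F : ℕ → ℕ} {r : ℕ} (hF : StrictMonoOn F (Set.Icc 1 r))
    (h1 : 1 ≤ F 1) : ∀ k ∈ Set.Icc 1 r, k ≤ F k := by
  rintro k ⟨hk1, hkr⟩
  induction k, hk1 using Nat.le_induction with
  | base => exact h1
  | succ k hk ih =>
    have := hF ⟨hk, by omega⟩ ⟨by omega, hkr⟩ (Nat.lt_succ_self k)
    have := ih (by omega)
    omega

lemma eq_self_of_bijOn_of_strictMonoOn {F : ℕ → ℕ} {r R u : ℕ}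
    (hF : Set.BijOn F (Set.Icc 1 R) (Set.Icc 1 R)) (hmono : StrictMonoOn F (Set.Icc 1 r))
    (hhigh : ∀ j ∈ Set.Ioc r R, u ≤ F j) : ∀ j ∈ Set.Icc 1 R, j < u → F j = j := by
  intro j hj hju
  induction j using Nat.strong_induction_on with
  | _ j ih =>
    obtain ⟨k, hk, rfl⟩ := hF.surjOn hj
    have hkr : k ≤ r := by
      by_contra hkr
      exact absurd (hhigh k ⟨by omega, hk.2⟩) (by omega)
    have hkF : k ≤ F k :=
      le_of_strictMonoOn_Icc hmono (hF.mapsTo ⟨le_rfl, hk.1.trans hk.2⟩).1 k ⟨hk.1, hkr⟩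
    rcases hkF.lt_or_eq with hlt | heq
    · have := ih k hlt hk (by omega)
      omega
    · exact (congrArg F heq).symm

lemma isST_wcomp_cat {x y f : List ℕ} {r s : ℕ} (hx : IsST x) (hxr : rk x = r) (hy : IsST y)
    (hys : rk y = s) (hf : IsShuffle [r, s] f) :
    IsST (wcomp f (cat x y)) ∧ rk (wcomp f (cat x y)) = r + s := by
  have hcat := isST_cat hx hy
  rw [hxr, hys] at hcat
  have hfrk : rk f = f.length := by rw [hf.2, hf.length_eq]; simp
  simpa [hf.length_eq] using isST_wcomp hf.1.1 hfrk hcat.1 (by rw [hcat.2, hf.length_eq])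

lemma mem_map_add_iff {y : List ℕ} (hy : IsST y) (r : ℕ) {j : ℕ} :
    j ∈ y.map (· + r) ↔ j ∈ Set.Ioc r (r + rk y) := by
  simp only [List.mem_map, hy.mem_iff, Set.mem_Icc, Set.mem_Ioc]
  exact ⟨by rintro ⟨k, hk, rfl⟩; omega, fun hj => ⟨j - r, by omega, by omega⟩⟩

lemma isDotCut_of_isDotCut_wcomp_cat {x y f : List ℕ} {r s p u : ℕ} (hx : IsST x)
    (hxr : rk x = r) (hy : IsST y) (hys : rk y = s) (hf : IsShuffle [r, s] f)
    (hfp : ent f (r + s) < ent f r) (hcut : IsDotCut (wcomp f (cat x y)) p u) :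
    IsDotCut x p u := by
  have hbij := hf.bijOn_ent
  have hmax : ∀ w ∈ Set.Icc 1 (r + s), ent f w = r + s → w = r :=
    fun _ => hf.eq_of_ent_eq_add hfp
  have hx' : ∀ w ∈ x, w ∈ Set.Icc 1 (r + s) := fun w hw => by
    obtain ⟨hw1, hw2⟩ := hx.mem_iff.1 hw
    exact ⟨hw1, by omega⟩
  have hYmax : r + s ∉ (y.map (· + r)).map (ent f) := by
    rw [List.mem_map]
    rintro ⟨j, hj, h⟩
    obtain ⟨hrj, hjs⟩ := (mem_map_add_iff hy r).1 hj
    exact absurd (hmax j ⟨by omega, hys ▸ hjs⟩ h) (by omega)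
  obtain ⟨-, hzrk⟩ := isST_wcomp_cat hx hxr hy hys hf
  rw [show wcomp f (cat x y) = x.map (ent f) ++ (y.map (· + r)).map (ent f) by
    simp [wcomp, cat, hxr]] at hcut hzrk
  have hp := hcut.le_length_left (hzrk ▸ hYmax)
  obtain ⟨hu, htake, hdrop, hmaxl, hmaxr⟩ := hcut
  rw [hzrk, List.take_append_of_le_length hp, ← List.map_take] at htake hmaxl
  rw [hzrk, List.drop_append_of_le_length hp, ← List.map_drop] at hmaxr
  rw [List.drop_append_of_le_length hp, ← List.map_drop] at hdrop
  have hfix := eq_self_of_bijOn_of_strictMonoOn hbij hf.strictMonoOn_left fun j hj =>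
    hdrop _ <| List.mem_append_right _ <|
      List.mem_map_of_mem ((mem_map_add_iff hy r).2 (hys ▸ hj))
  rw [IsDotCut, hxr]
  refine ⟨hu, fun w hw => ?_, fun w hw => ?_, ?_, ?_⟩
  · have hw' := hx' w (List.mem_of_mem_take hw)
    rcases htake _ (List.mem_map_of_mem hw) with h | h
    · have hfw := hbij.mapsTo hw'
      have := hbij.injOn hfw hw' (hfix _ hfw h)
      omega
    · exact Or.inr (hmax w hw' h)
  · have hw' := hx' w (List.mem_of_mem_drop hw)
    by_contra h
    have := hdrop _ (List.mem_append_left _ (List.mem_map_of_mem hw))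
    rw [hfix w hw' (by omega)] at this
    omega
  · obtain ⟨w, hw, hfw⟩ := List.mem_map.1 hmaxl
    exact hmax w (hx' w (List.mem_of_mem_take hw)) hfw ▸ hw
  · obtain ⟨w, hw, hfw⟩ := List.mem_map.1 ((List.mem_append.1 hmaxr).resolve_right hYmax)
    exact hmax w (hx' w (List.mem_of_mem_drop hw)) hfw ▸ hw

/-- if `x` is indecomposable and `f ∈ Sh^≺(r,s)`, then `f∘(x×y)` is
indecomposable. -/
theorem statement_18 (x y f : List ℕ) (n r m s : ℕ)
    (hx : memST x n r) (hxi : Indec x) (hy : memST y m s)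
    (hf : IsShuffle [r, s] f) (hfp : ent f (r + s) < ent f r) :
    Indec (wcomp f (cat x y)) := by
  obtain ⟨hxST, -, hxr⟩ := hx
  obtain ⟨hyST, -, hys⟩ := hy
  rw [indec_iff] at hxi ⊢
  exact ⟨(isST_wcomp_cat hxST hxr hyST hys hf).1, fun p u hcut =>
    hxi.2 p u (isDotCut_of_isDotCut_wcomp_cat hxST hxr hyST hys hf hfp hcut)⟩

end SurjPerm
end
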